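/- Let (G, G', ι, P, r) be a b-bounded refinement, let Γ be a nonempty family of paths in G, Γ' a nonempty family of paths in G', and let t : E → V be an orientation of G in which every vertex has outdegree at most d. For a metric θ on G, let μ_θ denote the metric on G' defined by μ_θ(ι(v)) = θ(v), μ_θ(z) = θ(t(e)) for z ∈ r(e), and μ_θ = 0 elsewhere. Suppose that for every admissible metric θ on G and every path γ' ∈ Γ' there exists a path γ ∈ Γ with L_θ(γ) ≤ L_{μ_θ}(γ'). Then EL(Γ) ≤ (1 + d·b)·EL(Γ'). -/

import Mathlib

open scoped ENNReal NNReal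

/-- A (vertex) path in a graph: consecutive vertices are adjacent or equal. -/
def IsPath {V : Type*} (G : SimpleGraph V) (γ : List V) : Prop :=
  γ.Chain' (fun a b => G.Adj a b ∨ a = b)

/-- The area of a metric `m : V → ℝ≥0`, valued in `ℝ≥0∞`. -/
noncomputable def gArea {V : Type*} (m : V → ℝ≥0) : ℝ≥0∞ :=
  ∑' v, (m v : ℝ≥0∞) ^ 2

/-- A metric is admissible if its area is finite and nonzero. -/
def Admissible {V : Type*} (m : V → ℝ≥0) : Prop :=
  0 < gArea m ∧ gArea m < ⊤

/-- The `m`-length of a path, summing the weights of its vertices with multiplicity. -/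
noncomputable def pLen {V : Type*} (m : V → ℝ≥0) (γ : List V) : ℝ≥0∞ :=
  (γ.map fun v => (m v : ℝ≥0∞)).sum

/-- The `m`-length of a path family: the infimum of the lengths of its members. -/
noncomputable def famLen {V : Type*} (m : V → ℝ≥0) (Γ : Set (List V)) : ℝ≥0∞ :=
  ⨅ γ ∈ Γ, pLen m γ

/-- The extremal length of a path family. -/
noncomputable def extremalLength {V : Type*} (Γ : Set (List V)) : ℝ≥0∞ :=
  ⨆ (m : V → ℝ≥0) (_ : Admissible m), famLen m Γ ^ 2 / gArea m

/-- A refinement of a simple graph `G` by a simple graph `G'`: an injection `ι` of the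
vertices, and for each edge `(a,b)` of `G` a finite path `ι a :: P a b ++ [ι b]` in `G'`
whose interior vertex list `P a b` (the vertices *attached* to the edge) is disjoint from
`ι(V)`, with attached sets of distinct edges pairwise disjoint. -/
structure Refinement {V V' : Type*} (G : SimpleGraph V) (G' : SimpleGraph V') where
  ι : V → V'
  inj : Function.Injective ι
  P : V → V → List V'
  path_adj : ∀ a b, G.Adj a b → List.Chain' G'.Adj (ι a :: P a b ++ [ι b])
  path_nodup : ∀ a b, G.Adj a b → (ι a :: P a b ++ [ι b]).Nodup
  symm : ∀ a b, G.Adj a b → P b a = (P a b).reverse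
  disj_range : ∀ a b, G.Adj a b → ∀ z ∈ P a b, z ∉ Set.range ι
  disj_edges : ∀ a b c d, G.Adj a b → G.Adj c d → s(a, b) ≠ s(c, d) →
    ∀ z ∈ P a b, z ∉ P c d

/-- A refinement is `b`-bounded if every edge has at most `b` attached vertices. -/
def Refinement.IsBBounded {V V' : Type*} {G : SimpleGraph V} {G' : SimpleGraph V'}
    (R : Refinement G G') (b : ℕ) : Prop :=
  ∀ a c, G.Adj a c → (R.P a c).length ≤ b

/-- The refined path `γ_r` of a path `γ`, obtained by replacing each edge `v w` of `γ`
by the path `ι v :: P v w ++ [ι w]` in `G'`. -/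
def Refinement.refinePath {V V' : Type*} {G : SimpleGraph V} {G' : SimpleGraph V'}
    (R : Refinement G G') : List V → List V'
  | [] => []
  | [v] => [R.ι v]
  | v :: w :: rest => R.ι v :: (R.P v w ++ R.refinePath (w :: rest))

/-!
Pull an admissible metric `θ` on `G` back to the metric `μ_θ` on `G'`. The shadow hypothesis
gives `L_θ(Γ) ≤ L_{μ_θ}(Γ')`, and `area θ ≤ area μ_θ ≤ (1 + d b) area θ`: besides its copy at
`ι v`, the weight `θ v` is repeated on the at most `b` interior vertices of each of the at most
`d` edges with tail `v`.
-/

open Function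

section Metrics

variable {α β : Type*}

lemma ENNReal.tsum_comp_le_mul_tsum (f : α → β) (g : β → ℝ≥0∞) {n : ℕ}
    (hf : ∀ y, (f ⁻¹' {y}).encard ≤ n) : ∑' x, g (f x) ≤ n * ∑' y, g y := by
  calc ∑' x, g (f x)
      = ∑' y, ∑' x : f ⁻¹' {y}, g (f x) := (ENNReal.tsum_fiberwise _ f).symm
    _ = ∑' y, (f ⁻¹' {y}).encard * g y := by
        refine tsum_congr fun y => ?_
        rw [← ENNReal.tsum_set_const]
        exact tsum_congr fun x => by rw [x.2]
    _ ≤ ∑' y, (n : ℝ≥0∞) * g y := by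
        gcongr with y
        exact_mod_cast hf y
    _ = n * ∑' y, g y := ENNReal.tsum_mul_left

lemma gArea_comp_le (m : β → ℝ≥0) (f : α → β) {n : ℕ}
    (hf : ∀ y, (f ⁻¹' {y}).encard ≤ n) : gArea (m ∘ f) ≤ n * gArea m :=
  ENNReal.tsum_comp_le_mul_tsum f (fun y => (m y : ℝ≥0∞) ^ 2) hf

lemma gArea_le_gArea_extend {f : α → β} (hf : Injective f) (g : α → ℝ≥0) (e : β → ℝ≥0) :
    gArea g ≤ gArea (extend f g e) := by
  calc gArea g = ∑' x, ((extend f g e (f x) : ℝ≥0) : ℝ≥0∞) ^ 2 := by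
        simp only [gArea, hf.extend_apply]
    _ ≤ gArea (extend f g e) :=
        ENNReal.tsum_comp_le_tsum_of_injective hf fun y => ((extend f g e y : ℝ≥0) : ℝ≥0∞) ^ 2

lemma gArea_extend_le {f : α → β} (hf : Injective f) (g : α → ℝ≥0) (e : β → ℝ≥0) :
    gArea (extend f g e) ≤ gArea g + gArea e := by
  have hpt : ∀ y, ((extend f g e y : ℝ≥0) : ℝ≥0∞) ^ 2 ≤
      extend f (fun x => (g x : ℝ≥0∞) ^ 2) 0 y + (e y : ℝ≥0∞) ^ 2 := by
    intro y
    by_cases hy : ∃ x, f x = y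
    · obtain ⟨x, rfl⟩ := hy
      simp only [hf.extend_apply]
      exact le_self_add
    · simp only [extend_apply' _ _ _ hy, Pi.zero_apply, zero_add, le_refl]
  calc gArea (extend f g e)
      ≤ ∑' y, (extend f (fun x => (g x : ℝ≥0∞) ^ 2) 0 y + (e y : ℝ≥0∞) ^ 2) :=
        ENNReal.tsum_le_tsum hpt
    _ = gArea g + gArea e := by rw [ENNReal.tsum_add, tsum_extend_zero hf]; rfl

lemma gArea_extend_zero_le {f : α → β} (hf : Injective f) (g : α → ℝ≥0) :
    gArea (extend f g 0) ≤ gArea g := by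
  simpa [gArea] using gArea_extend_le hf g 0

lemma famLen_le_famLen_of_forall_exists {θ : α → ℝ≥0} {μ : β → ℝ≥0}
    {Γ : Set (List α)} {Γ' : Set (List β)} (h : ∀ γ' ∈ Γ', ∃ γ ∈ Γ, pLen θ γ ≤ pLen μ γ') :
    famLen θ Γ ≤ famLen μ Γ' :=
  le_iInf₂ fun γ' hγ' =>
    let ⟨γ, hγ, hle⟩ := h γ' hγ'
    (iInf₂_le γ hγ).trans hle

lemma extremalLength_le_mul_of_forall_exists {Γ : Set (List α)} {Γ' : Set (List β)}
    {c : ℝ≥0∞} (hc₀ : c ≠ 0) (hc : c ≠ ⊤)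
    (h : ∀ θ : α → ℝ≥0, Admissible θ → ∃ μ : β → ℝ≥0,
      famLen θ Γ ≤ famLen μ Γ' ∧ gArea θ ≤ gArea μ ∧ gArea μ ≤ c * gArea θ) :
    extremalLength Γ ≤ c * extremalLength Γ' := by
  refine iSup₂_le fun θ hθ => ?_
  obtain ⟨μ, hlen, harea_ge, harea_le⟩ := h θ hθ
  have hμ : Admissible μ :=
    ⟨hθ.1.trans_le harea_ge, harea_le.trans_lt (ENNReal.mul_lt_top hc.lt_top hθ.2)⟩
  calc famLen θ Γ ^ 2 / gArea θ
      ≤ famLen μ Γ' ^ 2 / gArea θ := by gcongr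
    _ = c * famLen μ Γ' ^ 2 / (c * gArea θ) := (ENNReal.mul_div_mul_left _ _ hc₀ hc).symm
    _ ≤ c * famLen μ Γ' ^ 2 / gArea μ := ENNReal.div_le_div_left harea_le _
    _ = c * (famLen μ Γ' ^ 2 / gArea μ) := mul_div_assoc _ _ _
    _ ≤ c * extremalLength Γ' := by
        gcongr
        exact le_iSup₂ (f := fun (m : β → ℝ≥0) (_ : Admissible m) => famLen m Γ' ^ 2 / gArea m)
          μ hμ

end Metrics

namespace Refinement

variable {V V' : Type*} {G : SimpleGraph V} {G' : SimpleGraph V'} (R : Refinement G G')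

lemma mem_P_comm {a c : V} (h : G.Adj a c) {z : V'} : z ∈ R.P c a ↔ z ∈ R.P a c := by
  rw [R.symm a c h, List.mem_reverse]

def attached : Set V' := {z | ∃ d : G.Dart, z ∈ R.P d.fst d.snd}

/-- Independent of the chosen dart, by `disj_edges` (see `attachedEdge_eq`). -/
noncomputable def attachedEdge (z : R.attached) : G.edgeSet :=
  ⟨z.2.choose.edge, z.2.choose.edge_mem⟩

lemma attachedEdge_eq {a c : V} (h : G.Adj a c) (z : R.attached) (hz : ↑z ∈ R.P a c) :
    (R.attachedEdge z : Sym2 V) = s(a, c) := by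
  by_contra hne
  exact R.disj_edges _ _ a c z.2.choose.adj h hne z z.2.choose_spec hz

lemma encard_attachedEdge_fiber_le {b : ℕ} (hb : R.IsBBounded b) (e : G.edgeSet) :
    (R.attachedEdge ⁻¹' {e}).encard ≤ b := by
  classical
  obtain ⟨e, he⟩ := e
  induction e using Sym2.ind with | h a c => ?_
  have hac : G.Adj a c := he
  have hmaps : Set.MapsTo Subtype.val (R.attachedEdge ⁻¹' {⟨s(a, c), he⟩})
      ((R.P a c).toFinset : Set V') := by
    intro z hz
    have hedge : z.2.choose.edge = s(a, c) := congrArg Subtype.val hz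
    have hzP := z.2.choose_spec
    simp only [Finset.mem_coe, List.mem_toFinset]
    rcases Sym2.eq_iff.mp hedge with ⟨hfst, hsnd⟩ | ⟨hfst, hsnd⟩
    · rwa [hfst, hsnd] at hzP
    · rwa [hfst, hsnd, R.mem_P_comm hac] at hzP
  calc (R.attachedEdge ⁻¹' {⟨s(a, c), he⟩}).encard
      ≤ ((R.P a c).toFinset : Set V').encard :=
        Set.encard_le_encard_of_injOn hmaps Subtype.val_injective.injOn
    _ ≤ b := by
        rw [Set.encard_coe_eq_coe_finsetCard]
        exact_mod_cast (List.toFinset_card_le _).trans (hb a c hac)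

/-- The metric `μ_θ` on `G'`: `θ` on `ι(V)`, `θ (t e)` on the interior of the path of `e`,
and `0` elsewhere. -/
noncomputable def pullMetric (t : Sym2 V → V) (θ : V → ℝ≥0) : V' → ℝ≥0 :=
  extend R.ι θ (extend Subtype.val (fun z : R.attached => θ (t (R.attachedEdge z))) 0)

variable (t : Sym2 V → V) (θ : V → ℝ≥0)

lemma pullMetric_ι (v : V) : R.pullMetric t θ (R.ι v) = θ v :=
  R.inj.extend_apply _ _ v

lemma pullMetric_of_mem_P {a c : V} (h : G.Adj a c) {z : V'} (hz : z ∈ R.P a c) :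
    R.pullMetric t θ z = θ (t s(a, c)) := by
  have hza : z ∈ R.attached := ⟨⟨(a, c), h⟩, hz⟩
  rw [pullMetric, extend_apply' _ _ _ (R.disj_range a c h z hz), show z = ((⟨z, hza⟩ : R.attached) : V') from rfl, Subtype.val_injective.extend_apply,
    R.attachedEdge_eq h ⟨z, hza⟩ hz]

lemma pullMetric_of_not_mem {z : V'} (hι : z ∉ Set.range R.ι)
    (hP : ∀ a c, G.Adj a c → z ∉ R.P a c) : R.pullMetric t θ z = 0 := by
  have hz : ¬∃ w : R.attached, ↑w = z := by
    rintro ⟨⟨z, d, hz⟩, rfl⟩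
    exact hP d.fst d.snd d.adj hz
  rw [pullMetric, extend_apply' _ _ _ hι, extend_apply' _ _ _ hz, Pi.zero_apply]

lemma gArea_le_gArea_pullMetric : gArea θ ≤ gArea (R.pullMetric t θ) :=
  gArea_le_gArea_extend R.inj θ _

lemma gArea_pullMetric_le {b d : ℕ} (hb : R.IsBBounded b)
    (hout : ∀ v : V, ({e : Sym2 V | e ∈ G.edgeSet ∧ t e = v}).encard ≤ d) :
    gArea (R.pullMetric t θ) ≤ ((1 + d * b : ℕ) : ℝ≥0∞) * gArea θ := by
  let tE : G.edgeSet → V := fun e => t e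
  have htE : ∀ v, (tE ⁻¹' {v}).encard ≤ d := fun v =>
    (Set.encard_le_encard_of_injOn (t := {e | e ∈ G.edgeSet ∧ t e = v})
      (fun e he => ⟨e.2, he⟩) Subtype.val_injective.injOn).trans (hout v)
  calc gArea (R.pullMetric t θ)
      ≤ gArea θ + gArea ((θ ∘ tE) ∘ R.attachedEdge) := by
        unfold pullMetric
        grw [gArea_extend_le R.inj, gArea_extend_zero_le Subtype.val_injective]
        rfl
    _ ≤ gArea θ + b * (d * gArea θ) := by
        grw [gArea_comp_le _ _ (R.encard_attachedEdge_fiber_le hb), gArea_comp_le θ tE htE]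
    _ = ((1 + d * b : ℕ) : ℝ≥0∞) * gArea θ := by push_cast; ring

end Refinement

theorem stmt_8_general {V V' : Type*} (G : SimpleGraph V) (G' : SimpleGraph V')
    (R : Refinement G G') (b : ℕ) (hb : R.IsBBounded b)
    (Γ : Set (List V)) (Γ' : Set (List V'))
    (d : ℕ) (t : Sym2 V → V)
    (hout : ∀ v : V, ({e : Sym2 V | e ∈ G.edgeSet ∧ t e = v}).encard ≤ d)
    (hshadow : ∀ θ : V → ℝ≥0, Admissible θ → ∀ μ : V' → ℝ≥0,
      (∀ v, μ (R.ι v) = θ v) →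
      (∀ a c, G.Adj a c → ∀ z ∈ R.P a c, μ z = θ (t s(a, c))) →
      (∀ z : V', z ∉ Set.range R.ι → (∀ a c, G.Adj a c → z ∉ R.P a c) → μ z = 0) →
      ∀ γ' ∈ Γ', ∃ γ ∈ Γ, pLen θ γ ≤ pLen μ γ') :
    extremalLength Γ ≤ ((1 + d * b : ℕ) : ℝ≥0∞) * extremalLength Γ' := by
  refine extremalLength_le_mul_of_forall_exists (by simp) (ENNReal.natCast_ne_top _)
    fun θ hθ => ⟨R.pullMetric t θ, ?_, R.gArea_le_gArea_pullMetric t θ,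
      R.gArea_pullMetric_le t θ hb hout⟩
  exact famLen_le_famLen_of_forall_exists <| hshadow θ hθ _ (R.pullMetric_ι t θ)
    (fun _ _ h _ hz => R.pullMetric_of_mem_P t θ h hz)
    (fun _ => R.pullMetric_of_not_mem t θ)

/-- Second half of the main theorem: if every path of `Γ'` has a shadow in `Γ` of no
greater length with respect to the metric pulled back along a `d`-bounded-outdegree
orientation, then `EL(Γ) ≤ (1 + d·b)·EL(Γ')`. -/
theorem stmt_8 {V V' : Type*} (G : SimpleGraph V) (G' : SimpleGraph V')
    (R : Refinement G G') (b : ℕ) (hb : R.IsBBounded b)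
    (Γ : Set (List V)) (Γ' : Set (List V'))
    (hΓne : Γ.Nonempty) (hΓ'ne : Γ'.Nonempty)
    (hΓ : ∀ γ ∈ Γ, IsPath G γ) (hΓ' : ∀ γ ∈ Γ', IsPath G' γ)
    (d : ℕ) (t : Sym2 V → V) (ht : ∀ e ∈ G.edgeSet, t e ∈ e)
    (hout : ∀ v : V, ({e : Sym2 V | e ∈ G.edgeSet ∧ t e = v}).encard ≤ d)
    (hshadow : ∀ θ : V → ℝ≥0, Admissible θ → ∀ μ : V' → ℝ≥0,
      (∀ v, μ (R.ι v) = θ v) →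
      (∀ a c, G.Adj a c → ∀ z ∈ R.P a c, μ z = θ (t s(a, c))) →
      (∀ z : V', z ∉ Set.range R.ι → (∀ a c, G.Adj a c → z ∉ R.P a c) → μ z = 0) →
      ∀ γ' ∈ Γ', ∃ γ ∈ Γ, pLen θ γ ≤ pLen μ γ') :
    extremalLength Γ ≤ ((1 + d * b : ℕ) : ℝ≥0∞) * extremalLength Γ' :=
  stmt_8_general G G' R b hb Γ Γ' d t hout hshadow
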